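/- Assume Hypothesis (Contra) and that T is abelian. Then: (i) T is F-conjugate to Q, so there exists α ∈ Iso_F(Q,T) with S_{Q,V}(T) = ^αV; and (ii) for every subgroup K with T < C_K(T) ≤ K ≤ S, the relative trace satisfies tr_T^K(S_{Q,V}(T)) = 0. -/

import Mathlib

open Subgroup

section Core

variable {S : Type*} [Group S]

/-- Conjugation by `s` as a homomorphism between subgroups `P` and `Q` of `S`,
when `s` conjugates `P` into `Q`. -/
def conjMap (s : S) (P Q : Subgroup S) (h : ∀ x ∈ P, s * x * s⁻¹ ∈ Q) : P →* Q where
  toFun x := ⟨s * ↑x * s⁻¹, h x x.2⟩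
  map_one' := by ext; simp
  map_mul' x y := by ext; push_cast; group

/-- The range in `S` of a homomorphism between subgroups of `S`. -/
def rngS {P Q : Subgroup S} (φ : P →* Q) : Subgroup S := (Q.subtype.comp φ).range

lemma rngS_le {P Q : Subgroup S} (φ : P →* Q) : rngS φ ≤ Q := by
  rintro x ⟨y, rfl⟩
  exact (φ y).2

/-- A fusion system on a group `S`: a collection of injective homomorphisms between
the subgroups of `S`, containing all homomorphisms induced by conjugation in `S`,
closed under composition and taking inverses of isomorphisms, and such that every
morphism factors as an isomorphism in the system followed by an inclusion. -/
structure FusionSystem (S : Type*) [Group S] where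
  Hom : ∀ P Q : Subgroup S, Set (P →* Q)
  inj : ∀ {P Q : Subgroup S} (φ : P →* Q), φ ∈ Hom P Q → Function.Injective φ
  conj_mem : ∀ (P Q : Subgroup S) (s : S) (h : ∀ x ∈ P, s * x * s⁻¹ ∈ Q),
    conjMap s P Q h ∈ Hom P Q
  comp_mem : ∀ {P Q R : Subgroup S} (φ : P →* Q) (ψ : Q →* R),
    φ ∈ Hom P Q → ψ ∈ Hom Q R → ψ.comp φ ∈ Hom P R
  inv_mem : ∀ {P Q : Subgroup S} (e : P ≃* Q), e.toMonoidHom ∈ Hom P Q →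
    e.symm.toMonoidHom ∈ Hom Q P
  factor : ∀ {P Q : Subgroup S} (φ : P →* Q) (hφ : φ ∈ Hom P Q),
    ∃ e : P ≃* rngS φ, e.toMonoidHom ∈ Hom P (rngS φ) ∧
      (Subgroup.inclusion (rngS_le φ)).comp e.toMonoidHom = φ

namespace FusionSystem

variable (F : FusionSystem S)

/-- The set of `F`-isomorphisms from `P` to `Q`. -/
def IsoF (P Q : Subgroup S) : Set (P ≃* Q) := {e | e.toMonoidHom ∈ F.Hom P Q}

/-- Two subgroups are `F`-conjugate if they are isomorphic in `F`. -/
def FConj (P Q : Subgroup S) : Prop := ∃ e : P ≃* Q, e.toMonoidHom ∈ F.Hom P Q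

/-- A subgroup `P ≤ S` is `F`-centric if `C_S(Q) ≤ Q` for every `Q` that is
`F`-conjugate to `P`. -/
def Centric (P : Subgroup S) : Prop :=
  ∀ Q : Subgroup S, F.FConj P Q → Subgroup.centralizer (Q : Set S) ≤ Q

end FusionSystem

/-- Conjugation gives a homomorphism from the normalizer of `P` to the automorphisms
of `P`. -/
def conjAut (P : Subgroup S) : Subgroup.normalizer (P : Set S) →* MulAut P where
  toFun g :=
    { toFun := fun x => ⟨↑g * ↑x * (↑g)⁻¹, (mem_normalizer_iff.mp g.2 ↑x).mp x.2⟩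
      invFun := fun x => ⟨(↑g)⁻¹ * ↑x * ↑g, by
        have := (mem_normalizer_iff.mp ((Subgroup.normalizer (P : Set S)).inv_mem g.2) (↑x)).mp x.2
        simpa using this⟩
      left_inv := fun x => by ext; simp [mul_assoc]
      right_inv := fun x => by ext; simp [mul_assoc]
      map_mul' := fun x y => by ext; push_cast; group }
  map_one' := by ext; simp
  map_mul' g h := by ext x; simp only [MulAut.mul_apply, MulEquiv.coe_mk, Equiv.coe_fn_mk]; push_cast; group

namespace FusionSystem

variable (F : FusionSystem S)

/-- The group `Aut_F(P)` of `F`-automorphisms of `P`, as a subgroup of `MulAut P`. -/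
def AutF (P : Subgroup S) : Subgroup (MulAut P) where
  carrier := {e | e.toMonoidHom ∈ F.Hom P P}
  one_mem' := by
    have h : ∀ x ∈ P, (1 : S) * x * (1 : S)⁻¹ ∈ P := by intro x hx; simpa using hx
    have h2 := F.conj_mem P P 1 h
    have he : conjMap (1 : S) P P h = (1 : MulAut P).toMonoidHom := by
      ext x; simp [conjMap]
    rwa [he] at h2
  mul_mem' := by
    intro a b ha hb
    have he : (a * b).toMonoidHom = a.toMonoidHom.comp b.toMonoidHom := by
      ext x; rfl
    simp only [Set.mem_setOf_eq] at *
    rw [he]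
    exact F.comp_mem _ _ hb ha
  inv_mem' := by
    intro a ha
    exact F.inv_mem a ha

end FusionSystem

/-- The inner automorphisms of (the group) `P`, as a subgroup of `MulAut P`. -/
def innAut (P : Type*) [Group P] : Subgroup (MulAut P) := (MulAut.conj : P →* MulAut P).range

lemma innAut_normal (P : Type*) [Group P] : (innAut P).Normal := by
  constructor
  rintro _ ⟨x, rfl⟩ g
  refine ⟨g x, ?_⟩
  ext y
  simp [MulAut.conj]

namespace FusionSystem

variable (F : FusionSystem S)

/-- `Inn(P)` as a subgroup of `Aut_F(P)`. -/
def innFOf (P : Subgroup S) : Subgroup (F.AutF P) := (innAut P).subgroupOf (F.AutF P)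

instance innFOf_normal (P : Subgroup S) : (F.innFOf P).Normal :=
  Subgroup.Normal.subgroupOf (innAut_normal P) _

/-- `Out_F(P) = Aut_F(P)/Inn(P)`. -/
def OutF (P : Subgroup S) : Type _ := F.AutF P ⧸ F.innFOf P

noncomputable instance (P : Subgroup S) : Group (F.OutF P) :=
  inferInstanceAs (Group (F.AutF P ⧸ F.innFOf P))

/-- The quotient map `Aut_F(P) → Out_F(P)`. -/
def outMk (P : Subgroup S) : F.AutF P →* F.OutF P := QuotientGroup.mk' (F.innFOf P)

/-- Conjugation gives a homomorphism `N_S(P) → Aut_F(P)`. -/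
def toAutF (P : Subgroup S) : Subgroup.normalizer (P : Set S) →* F.AutF P :=
  (conjAut P).codRestrict (F.AutF P) (fun g => by
    have h : ∀ x ∈ P, (↑g : S) * x * (↑g : S)⁻¹ ∈ P := fun x hx =>
      (mem_normalizer_iff.mp g.2 x).mp hx
    have h2 := F.conj_mem P P ↑g h
    have he : conjMap (↑g : S) P P h = (conjAut P g).toMonoidHom := by
      ext x; rfl
    rw [he] at h2
    exact h2)

/-- For `K ≤ N_S(P)`, the subgroup `Out_K(P) ≤ Out_F(P)` of classes of automorphisms
induced by conjugation by elements of `K`. -/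
noncomputable def outOf (P K : Subgroup S) (h : K ≤ Subgroup.normalizer (P : Set S)) : Subgroup (F.OutF P) :=
  ((F.outMk P).comp ((F.toAutF P).comp (Subgroup.inclusion h))).range

/-- `Aut_S(P)` as a subgroup of `Aut_F(P)`. -/
def AutSF (P : Subgroup S) : Subgroup (F.AutF P) := (F.toAutF P).range

/-- `P` is fully automized (in `F`, at the prime `p`) if `Aut_S(P)` is a Sylow
`p`-subgroup of `Aut_F(P)`. -/
def FullyAutomized (p : ℕ) [Fact p.Prime] (P : Subgroup S) : Prop :=
  ∃ Syl : Sylow p (F.AutF P), (Syl : Subgroup (F.AutF P)) = F.AutSF P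

/-- `P` is receptive in `F` if every `F`-isomorphism `φ : Q → P` extends to the
subgroup `N_φ = {g ∈ N_S(Q) | φ ∘ c_g ∘ φ⁻¹ ∈ Aut_S(P)}`. -/
def Receptive (P : Subgroup S) : Prop :=
  ∀ (Q : Subgroup S) (φ : Q ≃* P), φ.toMonoidHom ∈ F.Hom Q P →
    ∃ N : Subgroup S,
      (∀ g : S, g ∈ N ↔ ∃ hg : g ∈ Subgroup.normalizer (Q : Set S), ∃ h ∈ Subgroup.normalizer (P : Set S), ∀ q : Q,
        (↑(φ ⟨g * ↑q * g⁻¹, (mem_normalizer_iff.mp hg ↑q).mp q.2⟩) : S)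
          = h * ↑(φ q) * h⁻¹) ∧
      ∃ ψ ∈ F.Hom N ⊤, ∀ (q : S) (hq : q ∈ Q) (hq' : q ∈ N),
        (↑(ψ ⟨q, hq'⟩) : S) = ↑(φ ⟨q, hq⟩)

/-- A fusion system is saturated if every `F`-conjugacy class of subgroups contains a
subgroup that is fully automized and receptive. -/
def Saturated (p : ℕ) [Fact p.Prime] : Prop :=
  ∀ P : Subgroup S, ∃ P' : Subgroup S, F.FConj P P' ∧
    F.FullyAutomized p P' ∧ F.Receptive P'

end FusionSystem

end Core

section SQV

open DirectSum

variable {S : Type*} [Group S]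

namespace FusionSystem

variable (F : FusionSystem S)

/-- Conjugation of `F`-automorphism groups by an `F`-isomorphism `e : Q ≃* L`:
`γ ↦ e⁻¹ ∘ γ ∘ e`. -/
def autConj {Q L : Subgroup S} (e : Q ≃* L) (he : e.toMonoidHom ∈ F.Hom Q L) :
    F.AutF L →* F.AutF Q where
  toFun γ := ⟨(e.trans γ.1).trans e.symm, by
    have h1 : ((e.trans γ.1).trans e.symm).toMonoidHom
        = (e.symm.toMonoidHom.comp γ.1.toMonoidHom).comp e.toMonoidHom := by
      ext x; rfl
    show ((e.trans γ.1).trans e.symm).toMonoidHom ∈ F.Hom Q Q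
    rw [h1]
    exact F.comp_mem _ _ he (F.comp_mem _ _ γ.2 (F.inv_mem e he))⟩
  map_one' := by
    ext x
    simp
  map_mul' a b := by
    ext x
    simp [MulAut.mul_apply]

/-- The induced homomorphism `Out_F(L) → Out_F(Q)` given by `[γ] ↦ [e⁻¹ ∘ γ ∘ e]`. -/
def outConj {Q L : Subgroup S} (e : Q ≃* L) (he : e.toMonoidHom ∈ F.Hom Q L) :
    F.OutF L →* F.OutF Q :=
  QuotientGroup.map _ _ (F.autConj e he) (by
    intro γ hγ
    have hγ' : (γ : MulAut ↥L) ∈ innAut ↥L := hγ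
    obtain ⟨x, hx⟩ := hγ'
    show (F.autConj e he) γ ∈ F.innFOf Q
    refine ⟨e.symm x, ?_⟩
    have hx' : ∀ z : L, (γ : MulAut L) z = x * z * x⁻¹ := by
      intro z
      rw [← hx]
      rfl
    ext y
    simp only [MulAut.conj_apply]
    have h2 : ((F.AutF Q).subtype ((F.autConj e he) γ)) y = e.symm ((γ : MulAut L) (e y)) := rfl
    rw [h2, hx' (e y)]
    push_cast [map_mul, map_inv, MulEquiv.symm_apply_apply]
    ring_nf)

end FusionSystem

/-- The relative trace of an action with respect to a subgroup `K ≤ G`, given by summing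
the action of a set of representatives of the left cosets of `K` in `G`. -/
noncomputable def cosetTrace {p : ℕ} {V : Type*} [AddCommGroup V] [Module (ZMod p) V]
    {G : Type*} [Group G] [Finite G] (K : Subgroup G) (σ : G →* (V →ₗ[ZMod p] V)) :
    V →ₗ[ZMod p] V :=
  haveI : Finite (G ⧸ K) := Quotient.finite _
  haveI := Fintype.ofFinite (G ⧸ K)
  ∑ x : G ⧸ K, σ (Quotient.out x)

namespace FusionSystem

variable (F : FusionSystem S)

/-- A choice of an `F`-isomorphism `Q ≃* L` for `F`-conjugate subgroups. -/
noncomputable def chosenIso {Q L : Subgroup S} (hc : F.FConj Q L) : Q ≃* L := hc.choose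

lemma chosenIso_mem {Q L : Subgroup S} (hc : F.FConj Q L) :
    (F.chosenIso hc).toMonoidHom ∈ F.Hom Q L := hc.choose_spec

end FusionSystem

/-- The conjugate `ˣL` of a subgroup. -/
def conjSub (x : S) (L : Subgroup S) : Subgroup S :=
  Subgroup.map (MulAut.conj x).toMonoidHom L

lemma conjSub_one (L : Subgroup S) : conjSub 1 L = L := by
  ext z
  simp [conjSub, Subgroup.mem_map, MulAut.conj_apply]

lemma conjSub_mul (x y : S) (L : Subgroup S) :
    conjSub (x * y) L = conjSub x (conjSub y L) := by
  ext z
  simp only [conjSub, Subgroup.mem_map, MulEquiv.coe_toMonoidHom, MulAut.conj_apply]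
  constructor
  · rintro ⟨a, ha, rfl⟩
    exact ⟨y * a * y⁻¹, ⟨a, ha, rfl⟩, by group⟩
  · rintro ⟨b, ⟨a, ha, rfl⟩, rfl⟩
    exact ⟨a, ha, by group⟩

/-- Conjugation as an isomorphism `L ≃* ˣL = L'`. -/
def conjEquiv (r : S) (L L' : Subgroup S) (h : conjSub r L = L') : L ≃* L' :=
  (MulEquiv.subgroupMap (MulAut.conj r) L).trans (MulEquiv.subgroupCongr h)

lemma conjEquiv_mem (F : FusionSystem S) (r : S) (L L' : Subgroup S) (h : conjSub r L = L') :
    (conjEquiv r L L' h).toMonoidHom ∈ F.Hom L L' := by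
  have hmem : ∀ x ∈ L, r * x * r⁻¹ ∈ L' := by
    intro x hx
    rw [← h]
    exact ⟨x, hx, rfl⟩
  have he : conjMap r L L' hmem = (conjEquiv r L L' h).toMonoidHom := by
    ext x; rfl
  rw [← he]
  exact F.conj_mem L L' r hmem

namespace FusionSystem

variable (F : FusionSystem S) {Q₀ : Subgroup S}
variable {p : ℕ} {V : Type*} [AddCommGroup V] [Module (ZMod p) V]

/-- The action of `N_P(L)` on `V` twisted by an `F`-isomorphism `α : Q₀ ≃* L`, i.e. the
action of `N_P(L)` on `^αV` through `N_P(L) → Out_F(L) → Out_F(Q₀)`. -/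
noncomputable def dpActionAt (ρ : Representation (ZMod p) (F.OutF Q₀) V)
    {L : Subgroup S} (α : Q₀ ≃* L) (hα : α.toMonoidHom ∈ F.Hom Q₀ L) (P : Subgroup S) :
    ↥(P ⊓ Subgroup.normalizer (L : Set S)) →* (V →ₗ[ZMod p] V) :=
  (((ρ : F.OutF Q₀ →* (V →ₗ[ZMod p] V)).comp (F.outConj α hα)).comp (F.outMk L)).comp
    ((F.toAutF L).comp (Subgroup.inclusion inf_le_right))

/-- The action of `N_P(L)` on `^αV` for the chosen isomorphism `α : Q₀ ≃* L`. -/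
noncomputable def dpAction (ρ : Representation (ZMod p) (F.OutF Q₀) V)
    {L : Subgroup S} (hc : F.FConj Q₀ L) (P : Subgroup S) :
    ↥(P ⊓ Subgroup.normalizer (L : Set S)) →* (V →ₗ[ZMod p] V) :=
  F.dpActionAt ρ (F.chosenIso hc) (F.chosenIso_mem hc) P

variable [Finite S]

/-- The summand `V_{α,L}(P) = tr_L^{N_P(L)}(^αV)` of the Díaz–Park Mackey functor. -/
noncomputable def dpSummand (ρ : Representation (ZMod p) (F.OutF Q₀) V)
    (P : Subgroup S) {L : Subgroup S} (hc : F.FConj Q₀ L) : Submodule (ZMod p) V :=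
  LinearMap.range (cosetTrace (L.subgroupOf (P ⊓ Subgroup.normalizer (L : Set S))) (F.dpAction ρ hc P))

/-- The setoid of `P`-conjugacy on the subgroups of `P` that are `F`-conjugate to `Q₀`. -/
def dpRel (Q₀ P : Subgroup S) : Setoid {L : Subgroup S // L ≤ P ∧ F.FConj Q₀ L} where
  r L₁ L₂ := ∃ x ∈ P, conjSub x L₁.1 = L₂.1
  iseqv := by
    constructor
    · intro L
      exact ⟨1, P.one_mem, conjSub_one _⟩
    · rintro L₁ L₂ ⟨x, hx, hconj⟩
      refine ⟨x⁻¹, P.inv_mem hx, ?_⟩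
      rw [← hconj, ← conjSub_mul]
      simp [conjSub_one]
    · rintro L₁ L₂ L₃ ⟨x, hx, hx'⟩ ⟨y, hy, hy'⟩
      exact ⟨y * x, P.mul_mem hy hx, by rw [conjSub_mul, hx', hy']⟩

/-- The index set of the Díaz–Park direct sum decomposition of `S_{Q₀,V}(P)`:
`P`-conjugacy classes of subgroups of `P` that are `F`-conjugate to `Q₀`. -/
def SQVIndex (Q₀ P : Subgroup S) : Type _ := Quotient (F.dpRel Q₀ P)

/-- The chosen representative of a `P`-conjugacy class. -/
noncomputable def dpRep {Q₀ P : Subgroup S} (c : F.SQVIndex Q₀ P) : Subgroup S :=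
  (Quotient.out c).1

lemma dpRep_le {Q₀ P : Subgroup S} (c : F.SQVIndex Q₀ P) : F.dpRep c ≤ P :=
  (Quotient.out c).2.1

lemma dpRep_fconj {Q₀ P : Subgroup S} (c : F.SQVIndex Q₀ P) : F.FConj Q₀ (F.dpRep c) :=
  (Quotient.out c).2.2

/-- The value `S_{Q₀,V}(P)` of the Díaz–Park Mackey functor:
the direct sum of `tr_L^{N_P(L)}(^αV)` over the `P`-conjugacy classes of subgroups `L ≤ P`
`F`-conjugate to `Q₀` (with chosen representatives and chosen isomorphisms). -/
noncomputable abbrev SQVModule (ρ : Representation (ZMod p) (F.OutF Q₀) V) (P : Subgroup S) :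
    Type _ :=
  ⨁ (c : F.SQVIndex Q₀ P), ↥(F.dpSummand ρ P (F.dpRep_fconj c))

/-- The inclusion of the summand indexed by the class `c` into `S_{Q₀,V}(P)`. -/
noncomputable def dpOf (ρ : Representation (ZMod p) (F.OutF Q₀) V) (P : Subgroup S)
    (c : F.SQVIndex Q₀ P) :
    ↥(F.dpSummand ρ P (F.dpRep_fconj c)) →ₗ[ZMod p] F.SQVModule ρ P :=
  letI := Classical.decEq (F.SQVIndex Q₀ P)
  DirectSum.lof (ZMod p) (F.SQVIndex Q₀ P) (fun c => ↥(F.dpSummand ρ P (F.dpRep_fconj c))) c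

/-- The component of an element of `S_{Q₀,V}(P)` at the class `c`, as an element of `V`. -/
noncomputable def dpComp {ρ : Representation (ZMod p) (F.OutF Q₀) V} {P : Subgroup S}
    (x : F.SQVModule ρ P) (c : F.SQVIndex Q₀ P) : V :=
  ((x : ⨁ (c : F.SQVIndex Q₀ P), ↥(F.dpSummand ρ P (F.dpRep_fconj c))) c : V)

/-- The element `[α_{L'}⁻¹ ∘ c_r ∘ α_L] ∈ Aut_F(Q₀)` transporting between the twisted
modules `^{c_r ∘ α_L}V` and `^{α_{L'}}V`. -/
noncomputable def transport {Q₀ L L' : Subgroup S} (hc : F.FConj Q₀ L) (hc' : F.FConj Q₀ L')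
    (r : S) (h : conjSub r L = L') : F.AutF Q₀ :=
  ⟨((F.chosenIso hc).trans (conjEquiv r L L' h)).trans (F.chosenIso hc').symm, by
    show (((F.chosenIso hc).trans (conjEquiv r L L' h)).trans (F.chosenIso hc').symm).toMonoidHom
      ∈ F.Hom Q₀ Q₀
    have h1 : (((F.chosenIso hc).trans (conjEquiv r L L' h)).trans
        (F.chosenIso hc').symm).toMonoidHom
        = ((F.chosenIso hc').symm.toMonoidHom.comp (conjEquiv r L L' h).toMonoidHom).comp
          (F.chosenIso hc).toMonoidHom := by
      ext x; rfl
    rw [h1]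
    exact F.comp_mem _ _ (F.chosenIso_mem hc)
      (F.comp_mem _ _ (conjEquiv_mem F r L L' h) (F.inv_mem _ (F.chosenIso_mem hc')))⟩

/-- The image of `transport` in `Out_F(Q₀)`. -/
noncomputable def outTransport {Q₀ L L' : Subgroup S} (hc : F.FConj Q₀ L)
    (hc' : F.FConj Q₀ L') (r : S) (h : conjSub r L = L') : F.OutF Q₀ :=
  F.outMk Q₀ (F.transport hc hc' r h)

/-- The relative trace `tr_{N_T(L)}^{N_R(L)}` on `^αV`, for `T ≤ R`. -/
noncomputable def dpIndTrace (ρ : Representation (ZMod p) (F.OutF Q₀) V)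
    {L : Subgroup S} (hc : F.FConj Q₀ L) (T R : Subgroup S) (hTR : T ≤ R) :
    V →ₗ[ZMod p] V :=
  cosetTrace ((T ⊓ Subgroup.normalizer (L : Set S)).subgroupOf (R ⊓ Subgroup.normalizer (L : Set S))) (F.dpAction ρ hc R)

/-- The restriction and induction maps of the Díaz–Park Mackey functor `S_{Q₀,V}`,
characterized on each direct summand by the formulas of Díaz–Park:
restriction along `T ≤ P` maps the summand of the class of `L` diagonally (via the
identifications `^{c_r∘α_L}V ≅ ^{α_{L'}}V`) into the summands of the `T`-classes of the
`P`-conjugates `L'` of `L` contained in `T`, and is zero on all other components;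
induction along `T ≤ R` maps the summand of the class of `L` into the summand of the
`R`-class of `L` by the relative trace `tr_{N_T(L)}^{N_R(L)}`. -/
structure SQVMaps (ρ : Representation (ZMod p) (F.OutF Q₀) V) where
  res : ∀ {T P : Subgroup S}, T ≤ P → (F.SQVModule ρ P →ₗ[ZMod p] F.SQVModule ρ T)
  ind : ∀ {T R : Subgroup S}, T ≤ R → (F.SQVModule ρ T →ₗ[ZMod p] F.SQVModule ρ R)
  res_spec : ∀ {T P : Subgroup S} (hTP : T ≤ P) (c : F.SQVIndex Q₀ P)
    (v : ↥(F.dpSummand ρ P (F.dpRep_fconj c))) (c' : F.SQVIndex Q₀ T)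
    (r : S), r ∈ P → (h : conjSub r (F.dpRep c) = F.dpRep c') →
      F.dpComp (res hTP (F.dpOf ρ P c v)) c'
        = ρ (F.outTransport (F.dpRep_fconj c) (F.dpRep_fconj c') r h) (v : V)
  res_spec₂ : ∀ {T P : Subgroup S} (hTP : T ≤ P) (c : F.SQVIndex Q₀ P)
    (v : ↥(F.dpSummand ρ P (F.dpRep_fconj c))) (c' : F.SQVIndex Q₀ T),
      (¬ ∃ r ∈ P, conjSub r (F.dpRep c) = F.dpRep c') →
      F.dpComp (res hTP (F.dpOf ρ P c v)) c' = 0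
  ind_spec : ∀ {T R : Subgroup S} (hTR : T ≤ R) (c : F.SQVIndex Q₀ T)
    (v : ↥(F.dpSummand ρ T (F.dpRep_fconj c))) (c' : F.SQVIndex Q₀ R)
    (r : S), r ∈ R → (h : conjSub r (F.dpRep c) = F.dpRep c') →
      F.dpComp (ind hTR (F.dpOf ρ T c v)) c'
        = ρ (F.outTransport (F.dpRep_fconj c) (F.dpRep_fconj c') r h)
            (F.dpIndTrace ρ (F.dpRep_fconj c) T R hTR (v : V))
  ind_spec₂ : ∀ {T R : Subgroup S} (hTR : T ≤ R) (c : F.SQVIndex Q₀ T)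
    (v : ↥(F.dpSummand ρ T (F.dpRep_fconj c))) (c' : F.SQVIndex Q₀ R),
      (¬ ∃ r ∈ R, conjSub r (F.dpRep c) = F.dpRep c') →
      F.dpComp (ind hTR (F.dpOf ρ T c v)) c' = 0

/-- A representation is simple (irreducible) if the module is nonzero and has no proper
nonzero invariant submodules. -/
def IsSimpleRep (ρ : Representation (ZMod p) (F.OutF Q₀) V) : Prop :=
  Nontrivial V ∧ ∀ W : Submodule (ZMod p) V,
    (∀ (g : F.OutF Q₀), ∀ v ∈ W, ρ g v ∈ W) → W = ⊥ ∨ W = ⊤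

end FusionSystem

end SQV

/-!
Since `T = P ∩ R` is abelian, it centralizes each of its subgroups `L`, so `N_T(L) = T` acts
trivially on `^αV` and `tr_L^T` is multiplication by `|T : L|`, which `p` divides when `L < T`.
Hence the only summand of `S_{Q,V}(T)` that can be nonzero is the one at `L = T`, where the trace
is over the trivial quotient and so is all of `V`. The composite `Ind ∘ Res` factors through
`S_{Q,V}(T)`, so this summand exists, i.e. `T` is `F`-conjugate to `Q`. The same index argument,
with `C_K(T)` acting trivially and `p ∣ |C_K(T) : T|`, kills `tr_T^K`.
-/

section CosetTrace

variable {p : ℕ} {V : Type*} [AddCommGroup V] [Module (ZMod p) V]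
  {G : Type*} [Group G] [Finite G] (σ : G →* (V →ₗ[ZMod p] V))

theorem cosetTrace_eq_sum {K : Subgroup G} [Fintype (G ⧸ K)] :
    cosetTrace K σ = ∑ x : G ⧸ K, σ x.out := by
  unfold cosetTrace
  congr!

theorem cosetTrace_eq_relIndex_smul {T C : Subgroup G} (hTC : T ≤ C) (hσ : ∀ c ∈ C, σ c = 1) :
    cosetTrace T σ = T.relIndex C • cosetTrace C σ := by
  have := Fintype.ofFinite (G ⧸ T)
  have := Fintype.ofFinite (G ⧸ C)
  have := Fintype.ofFinite (C ⧸ T.subgroupOf C)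
  let e := quotientEquivProdOfLE hTC
  have hσ_out : ∀ g : G, σ g = σ (g : G ⧸ C).out := fun g => by
    obtain ⟨c, hc⟩ := QuotientGroup.mk_out_eq_mul C g
    rw [hc, map_mul, hσ c c.2, mul_one]
  have hσ_fst : ∀ x : G ⧸ T, σ x.out = σ (e x).1.out := fun x => by
    conv_rhs => rw [← Quotient.out_eq x]
    exact hσ_out _
  rw [cosetTrace_eq_sum, cosetTrace_eq_sum]
  calc ∑ x : G ⧸ T, σ x.out = ∑ x : G ⧸ T, σ (e x).1.out := Fintype.sum_congr _ _ hσ_fst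
    _ = ∑ w : (G ⧸ C) × (C ⧸ T.subgroupOf C), σ w.1.out := Fintype.sum_equiv e _ _ fun _ => rfl
    _ = ∑ y : G ⧸ C, T.relIndex C • σ y.out := by
        simp only [Fintype.sum_prod_type, Finset.sum_const, Finset.card_univ,
          ← Nat.card_eq_fintype_card]
        rfl
    _ = T.relIndex C • ∑ y : G ⧸ C, σ y.out := (Finset.smul_sum ..).symm

theorem range_cosetTrace_top : LinearMap.range (cosetTrace (⊤ : Subgroup G) σ) = ⊤ := by
  have := QuotientGroup.subsingleton_quotient_top (G := G)
  have := Fintype.ofFinite (G ⧸ (⊤ : Subgroup G))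
  rw [cosetTrace_eq_sum, Fintype.sum_subsingleton _ 1, LinearMap.range_eq_top]
  intro v
  refine ⟨σ (Quotient.out (1 : G ⧸ (⊤ : Subgroup G)))⁻¹ v, ?_⟩
  rw [← Module.End.mul_apply, ← map_mul, mul_inv_cancel, map_one, Module.End.one_apply]

end CosetTrace

theorem IsPGroup.dvd_relIndex_of_not_le {p : ℕ} [Fact p.Prime] {G : Type*} [Group G] [Finite G]
    (hG : IsPGroup p G) {H K : Subgroup G} (h : ¬ K ≤ H) : p ∣ H.relIndex K := by
  obtain ⟨n, hn⟩ := (hG.to_subgroup K).exists_card_eq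
  obtain ⟨k, -, hk⟩ := (Nat.dvd_prime_pow Fact.out).mp (hn ▸ H.relIndex_dvd_card K)
  rcases k with _ | k
  · exact absurd (relIndex_eq_one.mp (by simpa using hk)) h
  · exact hk ▸ dvd_pow_self p k.succ_ne_zero

theorem IsPGroup.cosetTrace_subgroupOf_eq_zero {p : ℕ} [Fact p.Prime] {V : Type*}
    [AddCommGroup V] [Module (ZMod p) V] {S : Type*} [Group S] [Finite S] (hS : IsPGroup p S)
    {L X C : Subgroup S} (σ : X →* (V →ₗ[ZMod p] V)) (hσ : ∀ g : X, (g : S) ∈ C → σ g = 1)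
    (hLC : L ≤ C) {g : S} (hgX : g ∈ X) (hgC : g ∈ C) (hgL : g ∉ L) :
    cosetTrace (L.subgroupOf X) σ = 0 := by
  have hdvd : p ∣ (L.subgroupOf X).relIndex (C.subgroupOf X) :=
    (hS.to_subgroup X).dvd_relIndex_of_not_le fun h => hgL (h (x := ⟨g, hgX⟩) hgC)
  rw [cosetTrace_eq_relIndex_smul σ (fun _ hx => hLC hx) fun c hc => hσ c (mem_subgroupOf.mp hc),
    ← Nat.cast_smul_eq_nsmul (ZMod p), (ZMod.natCast_eq_zero_iff _ _).mpr hdvd, zero_smul]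

namespace FusionSystem

variable {S : Type*} [Group S] (F : FusionSystem S)

theorem toAutF_eq_one_of_mem_centralizer {L : Subgroup S} (g : normalizer (L : Set S))
    (hg : (g : S) ∈ centralizer (L : Set S)) : F.toAutF L g = 1 := by
  ext x
  show (g : S) * x * (g : S)⁻¹ = x
  rw [← mem_centralizer_iff.mp hg x x.2, mul_inv_cancel_right]

variable {Q₀ : Subgroup S} {p : ℕ} {V : Type*} [AddCommGroup V] [Module (ZMod p) V]
  (ρ : Representation (ZMod p) (F.OutF Q₀) V)

theorem dpAction_eq_one_of_mem_centralizer {L : Subgroup S} (hc : F.FConj Q₀ L) (K : Subgroup S)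
    (g : ↥(K ⊓ normalizer (L : Set S))) (hg : (g : S) ∈ centralizer (L : Set S)) :
    F.dpAction ρ hc K g = 1 := by
  simp only [dpAction, dpActionAt, MonoidHom.comp_apply,
    F.toAutF_eq_one_of_mem_centralizer (inclusion inf_le_right g) hg, map_one]

variable [Finite S]

theorem dpSummand_self_eq_top {L : Subgroup S} (hc : F.FConj Q₀ L) : F.dpSummand ρ L hc = ⊤ := by
  have hL : L.subgroupOf (L ⊓ normalizer (L : Set S)) = ⊤ :=
    subgroupOf_eq_top.mpr inf_le_left
  rw [dpSummand, hL, range_cosetTrace_top]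

theorem dpSummand_eq_bot_of_lt [Fact p.Prime] (hS : IsPGroup p S) {L T : Subgroup S}
    (hc : F.FConj Q₀ L) (hLT : L < T) (hTL : T ≤ centralizer (L : Set S)) :
    F.dpSummand ρ T hc = ⊥ := by
  obtain ⟨t, htT, htL⟩ := SetLike.exists_of_lt hLT
  have htC := hTL htT
  rw [dpSummand, hS.cosetTrace_subgroupOf_eq_zero _ (fun g => F.dpAction_eq_one_of_mem_centralizer
    ρ hc T g) (hLT.le.trans hTL) ⟨htT, centralizer_le_normalizer _ htC⟩ htC htL, LinearMap.range_zero]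

theorem cosetTrace_dpAction_eq_zero [Fact p.Prime] (hS : IsPGroup p S) {T K : Subgroup S}
    (hc : F.FConj Q₀ T) (hT : T < K ⊓ centralizer (T : Set S)) :
    cosetTrace (T.subgroupOf (K ⊓ normalizer (T : Set S))) (F.dpAction ρ hc K) = 0 := by
  obtain ⟨g, ⟨hgK, hgC⟩, hgT⟩ := SetLike.exists_of_lt hT
  exact hS.cosetTrace_subgroupOf_eq_zero _ (fun x => F.dpAction_eq_one_of_mem_centralizer ρ hc K x)
    (hT.le.trans inf_le_right) ⟨hgK, centralizer_le_normalizer _ hgC⟩ hgC hgT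

theorem exists_dpSummand_ne_bot {T : Subgroup S} [Nontrivial (F.SQVModule ρ T)] :
    ∃ c : F.SQVIndex Q₀ T, F.dpSummand ρ T (F.dpRep_fconj c) ≠ ⊥ := by
  by_contra! h
  have := fun c => Submodule.subsingleton_iff_eq_bot.mpr (h c)
  exact not_subsingleton (F.SQVModule ρ T) inferInstance

end FusionSystem

theorem contra_T_abelian_general
    (p : ℕ) [Fact p.Prime] {S : Type*} [Group S] [Finite S]
    (hS : IsPGroup p S) (F : FusionSystem S)
    (Q₀ : Subgroup S)
    (V : Type*) [AddCommGroup V] [Module (ZMod p) V]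
    (ρ : Representation (ZMod p) (F.OutF Q₀) V)
    (M : F.SQVMaps ρ) (P R : Subgroup S)
    (hcomp : (M.ind (inf_le_right : P ⊓ R ≤ R)).comp
      (M.res (inf_le_left : P ⊓ R ≤ P)) ≠ 0)
    (habT : IsMulCommutative (P ⊓ R : Subgroup S)) :
    ∃ hc : F.FConj Q₀ (P ⊓ R),
      F.dpSummand ρ (P ⊓ R) hc = ⊤ ∧
      (∀ c : F.SQVIndex Q₀ (P ⊓ R), F.dpRep c ≠ P ⊓ R →
        F.dpSummand ρ (P ⊓ R) (F.dpRep_fconj c) = ⊥) ∧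
      ∀ K : Subgroup S, K ≤ Subgroup.normalizer ((P ⊓ R : Subgroup S) : Set S) →
        P ⊓ R < K ⊓ Subgroup.centralizer ((P ⊓ R : Subgroup S) : Set S) →
        ∀ v : V,
          cosetTrace ((P ⊓ R).subgroupOf (K ⊓ Subgroup.normalizer ((P ⊓ R : Subgroup S) : Set S)))
            (F.dpAction ρ hc K) v = 0 := by
  have hproper : ∀ c : F.SQVIndex Q₀ (P ⊓ R), F.dpRep c ≠ P ⊓ R →
      F.dpSummand ρ (P ⊓ R) (F.dpRep_fconj c) = ⊥ := fun c hne =>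
    F.dpSummand_eq_bot_of_lt ρ hS _ (lt_of_le_of_ne (F.dpRep_le c) hne)
      ((le_centralizer (P ⊓ R)).trans (centralizer_le (F.dpRep_le c)))
  have : Nontrivial (F.SQVModule ρ (P ⊓ R)) := by
    by_contra! h
    exact hcomp (LinearMap.ext fun x => by simp [Subsingleton.elim (M.res _ x) 0])
  obtain ⟨c, hc_ne⟩ := F.exists_dpSummand_ne_bot ρ (T := P ⊓ R)
  have hrep : F.dpRep c = P ⊓ R := by_contra fun hne => hc_ne (hproper c hne)
  refine ⟨hrep ▸ F.dpRep_fconj c, F.dpSummand_self_eq_top ρ _, hproper, fun K _ hK v => ?_⟩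
  rw [F.cosetTrace_dpAction_eq_zero ρ hS _ hK, LinearMap.zero_apply]

/-- Lemma 3.6: under Hypothesis (Contra), if `T = P ∩ R` is abelian then:
(i) `T` is `F`-conjugate to `Q` and `S_{Q,V}(T) = ^αV` (the summand of the class of `T`
itself is all of `V` and all other summands vanish); (ii) for every `K` with
`T < C_K(T) ≤ K ≤ S` (and `K ≤ N_S(T)`, so that `K` acts on `^αV`), the relative trace
`tr_T^K` vanishes on `S_{Q,V}(T) = ^αV`. -/
theorem contra_T_abelian
    (p : ℕ) [Fact p.Prime] (hodd : Odd p) {S : Type*} [Group S] [Finite S]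
    (hS : IsPGroup p S) (F : FusionSystem S) (hF : F.Saturated p)
    (Q₀ : Subgroup S) (hQ : ¬ F.Centric Q₀)
    (V : Type*) [AddCommGroup V] [Module (ZMod p) V]
    (ρ : Representation (ZMod p) (F.OutF Q₀) V) (hρ : F.IsSimpleRep ρ)
    (M : F.SQVMaps ρ) (P R : Subgroup S) (hP : F.Centric P) (hR : F.Centric R)
    (hT : ¬ F.Centric (P ⊓ R))
    (hcomp : (M.ind (inf_le_right : P ⊓ R ≤ R)).comp
      (M.res (inf_le_left : P ⊓ R ≤ P)) ≠ 0)
    (habT : IsMulCommutative (P ⊓ R : Subgroup S)) :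
    ∃ hc : F.FConj Q₀ (P ⊓ R),
      F.dpSummand ρ (P ⊓ R) hc = ⊤ ∧
      (∀ c : F.SQVIndex Q₀ (P ⊓ R), F.dpRep c ≠ P ⊓ R →
        F.dpSummand ρ (P ⊓ R) (F.dpRep_fconj c) = ⊥) ∧
      ∀ K : Subgroup S, K ≤ Subgroup.normalizer ((P ⊓ R : Subgroup S) : Set S) →
        P ⊓ R < K ⊓ Subgroup.centralizer ((P ⊓ R : Subgroup S) : Set S) →
        ∀ v : V,
          cosetTrace ((P ⊓ R).subgroupOf (K ⊓ Subgroup.normalizer ((P ⊓ R : Subgroup S) : Set S)))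
            (F.dpAction ρ hc K) v = 0 :=
  contra_T_abelian_general p hS F Q₀ V ρ M P R hcomp habT
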